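/- Let f : 2^P → ℝ≥0 be monotone submodular with f(∅) = 0 on a finite ground set P, and let S_k be the set produced by k steps of greedy selection (each step adding an element with maximal marginal gain). Then f(S_k) ≥ (1 − (1 − 1/k)^k) · max_{|S| ≤ k} f(S) ≥ (1 − 1/e) · max_{|S| ≤ k} f(S). -/

import Mathlib

/-!
Write `Δ(p | T) = f (T ∪ {p}) - f T` and let `S` be any set with `|S| ≤ k`. Monotonicity and
submodularity give `f S ≤ f (S ∪ Sᵢ) ≤ f Sᵢ + ∑_{p ∈ S} Δ(p | Sᵢ) ≤ f Sᵢ + k Δ(pᵢ | Sᵢ)`, since the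
greedy element `pᵢ` has the largest gain. Hence the gap `f S - f Sᵢ` shrinks by the factor
`1 - 1/k` at every step, so `f S - f Sₖ ≤ (1 - 1/k)ᵏ f S`, and `(1 - 1/k)ᵏ ≤ e⁻¹`.
-/

open Finset

section Greedy

variable {α : Type*} [DecidableEq α] {f : Finset α → ℝ}

def marginalGain (f : Finset α → ℝ) (T : Finset α) (p : α) : ℝ :=
  f (insert p T) - f T

theorem union_le_add_sum_marginalGain
    (hsub : ∀ A B : Finset α, A ⊆ B → ∀ p : α, p ∉ B →
      f (insert p B) - f B ≤ f (insert p A) - f A)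
    (A T : Finset α) : f (A ∪ T) ≤ f T + ∑ p ∈ A, marginalGain f T p := by
  induction A using Finset.induction_on with
  | empty => simp
  | @insert a A ha ih =>
    rw [sum_insert ha, insert_union]
    by_cases h : a ∈ A ∪ T
    · have haT : a ∈ T := (mem_union.1 h).resolve_left ha
      rw [insert_eq_self.2 h]
      simp only [marginalGain, insert_eq_self.2 haT, sub_self, zero_add]
      exact ih
    · have := hsub T (A ∪ T) subset_union_right a h
      simp only [marginalGain] at *
      linarith

theorem le_add_card_mul_marginalGain_of_isMax
    (hmono : ∀ A B : Finset α, A ⊆ B → f A ≤ f B)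
    (hsub : ∀ A B : Finset α, A ⊆ B → ∀ p : α, p ∉ B →
      f (insert p B) - f B ≤ f (insert p A) - f A)
    {T : Finset α} {p : α} (hp : ∀ q, marginalGain f T q ≤ marginalGain f T p) (S : Finset α) :
    f S ≤ f T + #S * marginalGain f T p :=
  calc f S ≤ f (S ∪ T) := hmono _ _ subset_union_left
    _ ≤ f T + ∑ q ∈ S, marginalGain f T q := union_le_add_sum_marginalGain hsub S T
    _ ≤ f T + ∑ _q ∈ S, marginalGain f T p := by gcongr with q; exact hp q
    _ = f T + #S * marginalGain f T p := by rw [sum_const, nsmul_eq_mul]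

theorem sub_insert_le_mul_sub_of_isMax
    (hmono : ∀ A B : Finset α, A ⊆ B → f A ≤ f B)
    (hsub : ∀ A B : Finset α, A ⊆ B → ∀ p : α, p ∉ B →
      f (insert p B) - f B ≤ f (insert p A) - f A)
    {T : Finset α} {p : α} (hp : ∀ q, marginalGain f T q ≤ marginalGain f T p)
    {S : Finset α} {k : ℕ} (hk : 0 < k) (hS : #S ≤ k) :
    f S - f (insert p T) ≤ (1 - 1 / (k : ℝ)) * (f S - f T) := by
  have hk' : (0 : ℝ) < k := by exact_mod_cast hk
  have hgain : 0 ≤ marginalGain f T p := sub_nonneg.2 (hmono _ _ (subset_insert p T))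
  have hbound : f S ≤ f T + k * marginalGain f T p :=
    (le_add_card_mul_marginalGain_of_isMax hmono hsub hp S).trans
      (by gcongr)
  have hdiv : (f S - f T) / k ≤ marginalGain f T p := by
    rw [div_le_iff₀ hk']; linarith
  calc f S - f (insert p T) = (f S - f T) - marginalGain f T p := by
        rw [marginalGain]; ring
    _ ≤ (f S - f T) - (f S - f T) / k := by linarith
    _ = (1 - 1 / (k : ℝ)) * (f S - f T) := by ring

theorem greedy_gap_le_pow_mul
    (hmono : ∀ A B : Finset α, A ⊆ B → f A ≤ f B)
    (hsub : ∀ A B : Finset α, A ⊆ B → ∀ p : α, p ∉ B →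
      f (insert p B) - f B ≤ f (insert p A) - f A)
    {k : ℕ} (hk : 0 < k) {s : ℕ → Finset α}
    (hgreedy : ∀ i < k, ∃ p : α,
      s (i + 1) = insert p (s i) ∧ ∀ q, marginalGain f (s i) q ≤ marginalGain f (s i) p)
    {S : Finset α} (hS : #S ≤ k) :
    ∀ i ≤ k, f S - f (s i) ≤ (1 - 1 / (k : ℝ)) ^ i * (f S - f (s 0)) := by
  have hr : 0 ≤ 1 - 1 / (k : ℝ) := by
    rw [sub_nonneg, div_le_one (by exact_mod_cast hk)]; exact_mod_cast hk
  intro i hi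
  induction i with
  | zero => simp
  | succ i ih =>
    obtain ⟨p, hsucc, hp⟩ := hgreedy i hi
    calc f S - f (s (i + 1)) ≤ (1 - 1 / (k : ℝ)) * (f S - f (s i)) := by
          rw [hsucc]; exact sub_insert_le_mul_sub_of_isMax hmono hsub hp hk hS
      _ ≤ (1 - 1 / (k : ℝ)) * ((1 - 1 / (k : ℝ)) ^ i * (f S - f (s 0))) := by
          gcongr; exact ih (by omega)
      _ = (1 - 1 / (k : ℝ)) ^ (i + 1) * (f S - f (s 0)) := by ring

end Greedy

theorem greedy_submodular_guarantee_general
    {P : Type*} [DecidableEq P]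
    (f : Finset P → ℝ)
    (hempty : f ∅ = 0)
    (hmono : ∀ A B : Finset P, A ⊆ B → f A ≤ f B)
    (hsub : ∀ A B : Finset P, A ⊆ B → ∀ p : P, p ∉ B →
      f (insert p B) - f B ≤ f (insert p A) - f A)
    (k : ℕ) (hk : 1 ≤ k)
    (s : ℕ → Finset P)
    (hs0 : s 0 = ∅)
    (hgreedy : ∀ i < k, ∃ p : P,
      s (i + 1) = insert p (s i) ∧
      ∀ q : P, f (insert q (s i)) - f (s i) ≤ f (insert p (s i)) - f (s i)) :
    ∀ S : Finset P, S.card ≤ k →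
      (1 - (1 - 1 / (k : ℝ)) ^ k) * f S ≤ f (s k) ∧
      (1 - 1 / Real.exp 1) * f S ≤ f (s k) := by
  intro S hS
  have hgap := greedy_gap_le_pow_mul hmono hsub hk hgreedy hS k le_rfl
  rw [hs0, hempty, sub_zero] at hgap
  have hfS : 0 ≤ f S := hempty ▸ hmono ∅ S (empty_subset S)
  have hpow : (1 - 1 / (k : ℝ)) ^ k ≤ 1 / Real.exp 1 := by
    rw [one_div (Real.exp 1), ← Real.exp_neg]
    exact Real.one_sub_div_pow_le_exp_neg (by exact_mod_cast hk)
  have hratio : (1 - (1 - 1 / (k : ℝ)) ^ k) * f S ≤ f (s k) := by linarith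
  refine ⟨hratio, ?_⟩
  calc (1 - 1 / Real.exp 1) * f S ≤ (1 - (1 - 1 / (k : ℝ)) ^ k) * f S := by gcongr
    _ ≤ f (s k) := hratio

/-- Nemhauser–Wolsey–Fisher greedy guarantee. For a monotone
submodular `f` with `f ∅ = 0`, `k` steps of greedy selection achieve at least
a `(1 − (1 − 1/k)^k) ≥ (1 − 1/e)` fraction of the optimum over sets of size at
most `k`. -/
theorem greedy_submodular_guarantee
    {P : Type*} [Fintype P] [DecidableEq P] [Nonempty P]
    (f : Finset P → ℝ)
    (hnn : ∀ S, 0 ≤ f S)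
    (hempty : f ∅ = 0)
    (hmono : ∀ A B : Finset P, A ⊆ B → f A ≤ f B)
    (hsub : ∀ A B : Finset P, A ⊆ B → ∀ p : P, p ∉ B →
      f (insert p B) - f B ≤ f (insert p A) - f A)
    (k : ℕ) (hk : 1 ≤ k)
    (s : ℕ → Finset P)
    (hs0 : s 0 = ∅)
    (hgreedy : ∀ i < k, ∃ p : P,
      s (i + 1) = insert p (s i) ∧
      ∀ q : P, f (insert q (s i)) - f (s i) ≤ f (insert p (s i)) - f (s i)) :
    ∀ S : Finset P, S.card ≤ k →
      (1 - (1 - 1 / (k : ℝ)) ^ k) * f S ≤ f (s k) ∧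
      (1 - 1 / Real.exp 1) * f S ≤ f (s k) :=
  greedy_submodular_guarantee_general f hempty hmono hsub k hk s hs0 hgreedy
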